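/- The SOS face weights satisfy the crossing symmetry relation: for all a,b,c,d ∈ ℤ with |a−b|=|a−d|=|b−c|=|d−c|=1 and all u ∈ ℂ for which all quantities are defined, W(a,b;d,c|u) = (−1)^{(a+d−b−c)/2}·([b]/[a])·W(d,a;c,b|−u−1). -/

import Mathlib

open scoped BigOperators
open Complex

noncomputable section

namespace EV

/-- The infinite `q`-Pochhammer symbol `(z; q)_∞ = ∏_{n ≥ 0} (1 - z qⁿ)`. -/
def qpoch (z q : ℂ) : ℂ := ∏' n : ℕ, (1 - z * q ^ n)

/-- The double infinite product `(z; q₁, q₂)_∞`. -/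
def qpoch2 (z q1 q2 : ℂ) : ℂ := ∏' nm : ℕ × ℕ, (1 - z * q1 ^ nm.1 * q2 ^ nm.2)

/-- `Θ_q(z) = (z;q)_∞ (q/z;q)_∞ (q;q)_∞`. -/
def jtheta (q z : ℂ) : ℂ := qpoch z q * qpoch (q / z) q * qpoch q q

/-- `x ^ w := exp (w · log x)` for real `x` and complex exponent `w`. -/
def xpow (x : ℝ) (w : ℂ) : ℂ := Complex.exp (w * (Real.log x : ℂ))

/-- `[u] = x^{u²/r - u} Θ_{x^{2r}}(x^{2u})`. -/
def brk (x r : ℝ) (u : ℂ) : ℂ :=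
  xpow x (u ^ 2 / (r : ℂ) - u) * jtheta (xpow x (2 * (r : ℂ))) (xpow x (2 * u))

/-- The scalar factor `R₀(u)` of the eight-vertex `R`-matrix. -/
def R0 (x r : ℝ) (u : ℂ) : ℂ :=
  xpow x (-(2 * u) * ((r : ℂ) - 1) / (2 * (r : ℂ))) *
    (qpoch2 (xpow x (2 * (r : ℂ)) * xpow x 2 * xpow x (2 * u)) (xpow x 4) (xpow x (2 * (r : ℂ))) *
     qpoch2 (xpow x 2 * xpow x (2 * u)) (xpow x 4) (xpow x (2 * (r : ℂ))) *
     qpoch2 (xpow x (2 * (r : ℂ)) / xpow x (2 * u)) (xpow x 4) (xpow x (2 * (r : ℂ))) *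
     qpoch2 (xpow x 4 / xpow x (2 * u)) (xpow x 4) (xpow x (2 * (r : ℂ)))) /
    (qpoch2 (xpow x (2 * (r : ℂ)) * xpow x 2 / xpow x (2 * u)) (xpow x 4) (xpow x (2 * (r : ℂ))) *
     qpoch2 (xpow x 2 / xpow x (2 * u)) (xpow x 4) (xpow x (2 * (r : ℂ))) *
     qpoch2 (xpow x (2 * (r : ℂ)) * xpow x (2 * u)) (xpow x 4) (xpow x (2 * (r : ℂ))) *
     qpoch2 (xpow x 4 * xpow x (2 * u)) (xpow x 4) (xpow x (2 * (r : ℂ))))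

/-- None of the infinite-product factors in the denominator of `R₀(u)` vanishes. -/
def R0Defined (x r : ℝ) (u : ℂ) : Prop :=
  qpoch2 (xpow x (2 * (r : ℂ)) * xpow x 2 / xpow x (2 * u)) (xpow x 4) (xpow x (2 * (r : ℂ))) ≠ 0 ∧
  qpoch2 (xpow x 2 / xpow x (2 * u)) (xpow x 4) (xpow x (2 * (r : ℂ))) ≠ 0 ∧
  qpoch2 (xpow x (2 * (r : ℂ)) * xpow x (2 * u)) (xpow x 4) (xpow x (2 * (r : ℂ))) ≠ 0 ∧
  qpoch2 (xpow x 4 * xpow x (2 * u)) (xpow x 4) (xpow x (2 * (r : ℂ))) ≠ 0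

/-- `p̃ = e^{2πiτ}`. -/
def ptil (τ : ℂ) : ℂ := Complex.exp (2 * (Real.pi : ℂ) * Complex.I * τ)

/-- `ϑ₁(u|τ)`. -/
def th1 (τ u : ℂ) : ℂ :=
  2 * ptil τ ^ ((1 : ℂ) / 8) * qpoch (ptil τ) (ptil τ) * Complex.sin ((Real.pi : ℂ) * u) *
    ∏' n : ℕ, (1 - 2 * ptil τ ^ (n + 1) * Complex.cos (2 * (Real.pi : ℂ) * u)
                + ptil τ ^ (2 * (n + 1)))

/-- `ϑ₂(u|τ) = ϑ₁(u + 1/2 | τ)`. -/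
def th2 (τ u : ℂ) : ℂ := th1 τ (u + 1 / 2)

/-- `ϑ₀(u|τ)`. -/
def th0 (τ u : ℂ) : ℂ :=
  -Complex.I * Complex.exp ((Real.pi : ℂ) * Complex.I * (u + τ / 4)) * th1 τ (u + τ / 2)

/-- `ϑ₃(u|τ)`. -/
def th3 (τ u : ℂ) : ℂ :=
  Complex.exp ((Real.pi : ℂ) * Complex.I * (u + τ / 4)) * th1 τ (u + (τ + 1) / 2)

def av (r : ℝ) (τ u : ℂ) : ℂ :=
  th2 (τ / 2) (1 / (2 * (r : ℂ))) * th2 (τ / 2) (u / (2 * (r : ℂ))) /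
    (th2 (τ / 2) 0 * th2 (τ / 2) ((1 + u) / (2 * (r : ℂ))))

def bv (r : ℝ) (τ u : ℂ) : ℂ :=
  th2 (τ / 2) (1 / (2 * (r : ℂ))) * th1 (τ / 2) (u / (2 * (r : ℂ))) /
    (th2 (τ / 2) 0 * th1 (τ / 2) ((1 + u) / (2 * (r : ℂ))))

def cv (r : ℝ) (τ u : ℂ) : ℂ :=
  th1 (τ / 2) (1 / (2 * (r : ℂ))) * th2 (τ / 2) (u / (2 * (r : ℂ))) /
    (th2 (τ / 2) 0 * th1 (τ / 2) ((1 + u) / (2 * (r : ℂ))))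

def dv (r : ℝ) (τ u : ℂ) : ℂ :=
  -(th1 (τ / 2) (1 / (2 * (r : ℂ))) * th1 (τ / 2) (u / (2 * (r : ℂ))) /
    (th2 (τ / 2) 0 * th2 (τ / 2) ((1 + u) / (2 * (r : ℂ)))))

/-- The entry `R(u)^{e₁e₂}_{f₁f₂}` of the eight-vertex `R`-matrix, signs in `{1, -1}`. -/
def Rent (x r : ℝ) (τ u : ℂ) (e1 e2 f1 f2 : ℤ) : ℂ :=
  R0 x r u *
    (if e1 = f1 ∧ e2 = f2 then (if e1 = e2 then av r τ u else bv r τ u)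
     else if e1 = f2 ∧ e2 = f1 ∧ e1 ≠ e2 then cv r τ u
     else if e1 = -f1 ∧ e2 = -f2 ∧ e1 = e2 then dv r τ u
     else 0)

/-- All entries of `R(u)` are defined (no vanishing denominator). -/
def REntriesDefined (x r : ℝ) (τ u : ℂ) : Prop :=
  R0Defined x r u ∧ th2 (τ / 2) 0 ≠ 0 ∧
    th1 (τ / 2) ((1 + u) / (2 * (r : ℂ))) ≠ 0 ∧ th2 (τ / 2) ((1 + u) / (2 * (r : ℂ))) ≠ 0

/-- The SOS face weight `W(a,b;c,d|u)`, with `a,b` the top-row and `c,d` the bottom-row heights. -/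
def Wfw (x r : ℝ) (u : ℂ) (a b c d : ℤ) : ℂ :=
  if (b - a) ^ 2 = 1 ∧ (c - a) ^ 2 = 1 ∧ (d - b) ^ 2 = 1 ∧ (d - c) ^ 2 = 1 then
    (if d = a then
      (if b = c then
        R0 x r u * brk x r ((a : ℂ) - ((b - a : ℤ) : ℂ) * u) * brk x r 1 /
          (brk x r (a : ℂ) * brk x r (1 + u))
       else
        R0 x r u * brk x r (b : ℂ) * brk x r u / (brk x r (a : ℂ) * brk x r (1 + u)))
     else R0 x r u)
  else 0

/-- The intertwining vector component `ψ_ε(u)^a_b` (`ε = ±1`). -/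
def psiv (x r : ℝ) (τ : ℂ) (ε : ℤ) (u : ℂ) (a b : ℤ) : ℂ :=
  if ε = 1 then th0 (τ / 2) ((((a : ℂ) - (b : ℂ)) * u + (a : ℂ)) / (2 * (r : ℂ)))
  else th3 (τ / 2) ((((a : ℂ) - (b : ℂ)) * u + (a : ℂ)) / (2 * (r : ℂ)))

/-- The constant `C = x^{-r/4} e^{-πi/4} τ^{1/2}`. -/
def Cconst (x r : ℝ) (τ : ℂ) : ℂ :=
  xpow x (-(r : ℂ) / 4) * Complex.exp (-(Real.pi : ℂ) * Complex.I / 4) * τ ^ ((1 : ℂ) / 2)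

/-- The dual intertwining vector component `ψ*_ε(u)^a_b`. -/
def psisv (x r : ℝ) (τ : ℂ) (ε : ℤ) (u : ℂ) (a b : ℤ) : ℂ :=
  -(ε : ℂ) * (((a : ℂ) - (b : ℂ)) / (2 * brk x r (b : ℂ) * brk x r u)) * Cconst x r τ ^ 2 *
    psiv x r τ (-ε) (u - 1) a b

/-- The second intertwining vector component `ψ'_ε(u)^a_b`. -/
def psipv (x r : ℝ) (τ : ℂ) (ε : ℤ) (u : ℂ) (a b : ℤ) : ℂ :=
  brk x r u * brk x r (a : ℂ) / (brk x r (u - 1) * brk x r (b : ℂ)) * psiv x r τ ε (u - 2) a b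

/-- `ψ*_ε(u)^a_b`, set to `0` unless `|a - b| = 1`. -/
def psisg (x r : ℝ) (τ : ℂ) (ε : ℤ) (u : ℂ) (a b : ℤ) : ℂ :=
  if (a - b) ^ 2 = 1 then psisv x r τ ε u a b else 0

def sgnB (s : Bool) : ℤ := if s then 1 else -1

/-- A canonical admissible path of `k` unit steps from `a` to `b` (when `b - a ∈ {-k, -k+2, …, k}`):
first go up, then down. -/
def cpath (k : ℕ) (a b : ℤ) (j : ℕ) : ℤ :=
  if (j : ℤ) ≤ ((k : ℤ) + b - a) / 2 then a + j else a + 2 * (((k : ℤ) + b - a) / 2) - j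

/-- A path from `a` to `b` with prescribed intermediate values. -/
def pathExt (k : ℕ) (a b : ℤ) (f : Fin (k - 1) → ℤ) (j : ℕ) : ℤ :=
  if j = 0 then a else if j = k then b
  else if h : j - 1 < k - 1 then f ⟨j - 1, h⟩ else 0

/-- The fused intertwining vector component along the path `c`. -/
def psiFusedPath (x r : ℝ) (τ : ℂ) (k : ℕ) (ε : ℤ) (u : ℂ) (c : ℕ → ℤ) : ℂ :=
  ∑ s ∈ Finset.univ.filter (fun s : Fin k → Bool => (∑ j, sgnB (s j)) = ε),
    ∏ j : Fin k, psiv x r τ (sgnB (s j)) (u + (k : ℂ) - 1 - (j.val : ℂ)) (c j.val) (c (j.val + 1))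

/-- `ψ^{(k)}_ε(u)^a_b` (using the canonical admissible path from `a` to `b`). -/
def psiFused (x r : ℝ) (τ : ℂ) (k : ℕ) (ε : ℤ) (u : ℂ) (a b : ℤ) : ℂ :=
  psiFusedPath x r τ k ε u (cpath k a b)

/-- The fused dual intertwining vector component for the sign sequence `s`. -/
def psisFusedSeq (x r : ℝ) (τ : ℂ) (k : ℕ) (s : Fin k → Bool) (u : ℂ) (a b : ℤ) : ℂ :=
  ∑' f : Fin (k - 1) → ℤ, ∏ j : Fin k,
    psisg x r τ (sgnB (s j)) (u + (k : ℂ) - 1 - (j.val : ℂ))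
      (pathExt k a b f (j.val + 1)) (pathExt k a b f j.val)

/-- `ψ*^{(k)}_ε(u)^a_b` (using the canonical sign sequence of sum `ε`). -/
def psisFused (x r : ℝ) (τ : ℂ) (k : ℕ) (ε : ℤ) (u : ℂ) (a b : ℤ) : ℂ :=
  psisFusedSeq x r τ k (fun j => decide (j.val < k - ((k : ℤ) - ε).toNat / 2)) u a b

/-- `d ∈ {-k, -k+2, …, k}`. -/
def stepSet (k : ℕ) (d : ℤ) : Prop := d.natAbs ≤ k ∧ (d - k) % 2 = 0

/-- The `k×1` fused face weight `W^{(k,1)}(a,b;d,c|u)`. -/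
def W1k (x r : ℝ) (k : ℕ) (u : ℂ) (a b d c : ℤ) : ℂ :=
  ∑' f : Fin (k - 1) → ℤ, ∏ j : Fin k,
    Wfw x r (u + (k : ℂ) - 1 - (j.val : ℂ)) (cpath k a b j.val) (cpath k a b (j.val + 1))
      (pathExt k d c f j.val) (pathExt k d c f (j.val + 1))

/-- The `k×k` fused face weight `W^{(k,k)}(a,b;d,c|u)`. -/
def Wkk (x r : ℝ) (k : ℕ) (u : ℂ) (a b d c : ℤ) : ℂ :=
  ∑' g : Fin (k - 1) → ℤ, ∏ j : Fin k,
    W1k x r k (u - (k : ℂ) + 1 + (j.val : ℂ)) (pathExt k a d g j.val) (cpath k b c j.val)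
      (pathExt k a d g (j.val + 1)) (cpath k b c (j.val + 1))

/-- The fundamental `L`-matrix `L^{(1)}(m,m';n,n'|u)`. -/
def L1 (x r : ℝ) (u : ℂ) (m m' n n' : ℤ) : ℂ :=
  if (m' - m) ^ 2 = 1 ∧ (n' - n) ^ 2 = 1 then
    (if m' - m = n' - n then
      brk x r (u + ((n' - n : ℤ) : ℂ) * ((n : ℂ) - (m : ℂ)) / 2) *
        brk x r (((n : ℂ) + (m : ℂ)) / 2) / (brk x r u * brk x r (n : ℂ))
     else
      brk x r (u + ((n' - n : ℤ) : ℂ) * ((n : ℂ) + (m : ℂ)) / 2) *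
        brk x r (((n : ℂ) - (m : ℂ)) / 2) / (brk x r u * brk x r (n : ℂ)))
  else 0

/-- The `k`-fused `L`-matrix `L^{(k)}(m₀,m_k;n₀,n_k|u)` (canonical path in the `m`-variables). -/
def Lk (x r : ℝ) (k : ℕ) (u : ℂ) (m0 mk n0 nk : ℤ) : ℂ :=
  ∑' f : Fin (k - 1) → ℤ, ∏ j : Fin k,
    L1 x r (u + (k : ℂ) - 1 - (j.val : ℂ)) (cpath k m0 mk j.val) (cpath k m0 mk (j.val + 1))
      (pathExt k n0 nk f j.val) (pathExt k n0 nk f (j.val + 1))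

/-- The falling product `[A]_M = [A][A-1]⋯[A-M+1]`. -/
def ffall (x r : ℝ) (A : ℂ) (M : ℕ) : ℂ := ∏ i ∈ Finset.range M, brk x r (A - i)

/-- The elliptic binomial coefficient `[A; B]`. -/
def ebinom (x r : ℝ) (A : ℂ) (B : ℕ) : ℂ := ffall x r A B / ffall x r (B : ℂ) B

/-- The rising product `[A, B] = [A][A+1]⋯[B]` (equal to `1` if `B < A`). -/
def rising (x r : ℝ) (A B : ℤ) : ℂ :=
  ∏ i ∈ Finset.range ((B - A + 1).toNat), brk x r ((A : ℂ) + i)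

/-- The real infinite `q`-Pochhammer symbol. -/
def rqpoch (z q : ℝ) : ℝ := ∏' n : ℕ, (1 - z * q ^ n)

/-- The real value of `[a]` for real `a`. -/
def rbrk (x r a : ℝ) : ℝ :=
  x ^ (a ^ 2 / r - a) *
    (rqpoch (x ^ (2 * a)) (x ^ (2 * r)) * rqpoch (x ^ (2 * r) / x ^ (2 * a)) (x ^ (2 * r)) *
      rqpoch (x ^ (2 * r)) (x ^ (2 * r)))

/-- The symbol `(a,b)_M`. -/
def pairSym (x r : ℝ) (a b : ℤ) (M : ℕ) : ℂ :=
  (if 0 ≤ (a - b + (M : ℤ)) / 2 then (ebinom x r ((M : ℤ) : ℂ) (((a - b + (M : ℤ)) / 2).toNat))⁻¹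
   else 0) *
    rising x r ((a + b - (M : ℤ)) / 2) ((a + b + (M : ℤ)) / 2) /
    ((Real.sqrt (rbrk x r (a : ℝ) * rbrk x r (b : ℝ)) : ℝ) : ℂ)


lemma hasProd_zero_of_eq_zero {ι : Type*} {f : ι → ℂ} (i0 : ι) (h : f i0 = 0) :
    HasProd f 0 := by
  classical
  have hev : ∀ᶠ s : Finset ι in Filter.atTop, ∏ i ∈ s, f i = 0 := by
    filter_upwards [Filter.eventually_ge_atTop ({i0} : Finset ι)] with s hs
    exact Finset.prod_eq_zero (hs (Finset.mem_singleton_self i0)) h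
  exact Filter.Tendsto.congr' (hev.mono fun s hs => hs.symm) tendsto_const_nhds

lemma multipliable_one_add {ι : Type*} {g : ι → ℂ} (hg : Summable fun i => ‖g i‖) :
    Multipliable fun i => 1 + g i := by
  by_cases h : ∀ i, 1 + g i ≠ 0
  · refine Complex.multipliable_of_summable_log ?_
    have hsmall : ∀ᶠ i in Filter.cofinite, ‖g i‖ < 1/2 :=
      hg.tendsto_cofinite_zero.eventually_lt_const (by norm_num)
    refine Summable.of_norm_bounded_eventually (hg.mul_left (3/2)) ?_
    filter_upwards [hsmall] with i hi
    exact Complex.norm_log_one_add_half_le_self hi.le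
  · push_neg at h
    obtain ⟨i0, h0⟩ := h
    exact ⟨0, hasProd_zero_of_eq_zero i0 h0⟩

lemma multipliable_qpoch (w : ℂ) {q : ℂ} (hq : ‖q‖ < 1) :
    Multipliable fun n : ℕ => 1 - w * q ^ n := by
  have : Summable fun n : ℕ => ‖-(w * q ^ n)‖ := by
    have : Summable fun n : ℕ => ‖w‖ * ‖q‖ ^ n :=
      (summable_geometric_of_lt_one (norm_nonneg q) hq).mul_left _
    exact this.congr fun n => by simp [norm_mul, norm_pow]
  exact (multipliable_one_add this).congr fun n => by ring

lemma summable_norm2 (w : ℂ) {q1 q2 : ℂ} (hq1 : ‖q1‖ < 1) (hq2 : ‖q2‖ < 1) :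
    Summable fun nm : ℕ × ℕ => ‖-(w * q1 ^ nm.1 * q2 ^ nm.2)‖ := by
  have h1 : Summable fun n : ℕ => ‖w‖ * ‖q1‖ ^ n :=
    (summable_geometric_of_lt_one (norm_nonneg q1) hq1).mul_left _
  have h2 : Summable fun n : ℕ => ‖q2‖ ^ n :=
    summable_geometric_of_lt_one (norm_nonneg q2) hq2
  have := h1.mul_of_nonneg h2 (fun n => by positivity) (fun n => by positivity)
  exact this.congr fun nm => by
    simp [norm_mul, norm_pow, mul_assoc]

lemma multipliable_qpoch2 (w : ℂ) {q1 q2 : ℂ} (hq1 : ‖q1‖ < 1) (hq2 : ‖q2‖ < 1) :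
    Multipliable fun nm : ℕ × ℕ => 1 - w * q1 ^ nm.1 * q2 ^ nm.2 :=
  (multipliable_one_add (summable_norm2 w hq1 hq2)).congr fun nm => by ring

lemma qpoch_split (w : ℂ) {q : ℂ} (hq : ‖q‖ < 1) :
    qpoch w q = (1 - w) * qpoch (w * q) q := by
  have hm : Multipliable fun n : ℕ => 1 - w * q ^ (n + 1) :=
    (multipliable_qpoch (w * q) hq).congr fun n => by ring
  rw [qpoch, tprod_eq_zero_mul' (f := fun n : ℕ => 1 - w * q ^ n) hm, pow_zero, mul_one, qpoch]
  congr 1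
  exact tprod_congr fun n => by ring

/-- the equivalence `ℕ ≃ {p : ℕ×ℕ // p.1 = 0}` -/
def eSlice : ℕ ≃ {p : ℕ × ℕ // p ∈ {p : ℕ × ℕ | p.1 = 0}} where
  toFun n := ⟨(0, n), rfl⟩
  invFun p := p.1.2
  left_inv n := rfl
  right_inv p := by
    obtain ⟨⟨a, b⟩, hp⟩ := p
    simp only [Set.mem_setOf_eq] at hp
    subst hp; rfl

def eShift : ℕ × ℕ ≃ {p : ℕ × ℕ // p ∈ ({p : ℕ × ℕ | p.1 = 0} : Set (ℕ × ℕ))ᶜ} where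
  toFun nm := ⟨(nm.1 + 1, nm.2), by simp⟩
  invFun p := (p.1.1 - 1, p.1.2)
  left_inv nm := by simp
  right_inv p := by
    obtain ⟨⟨a, b⟩, hp⟩ := p
    simp only [Set.mem_compl_iff, Set.mem_setOf_eq] at hp
    apply Subtype.ext
    simp only []
    have : a - 1 + 1 = a := Nat.succ_pred_eq_of_pos (Nat.pos_of_ne_zero hp)
    rw [this]

lemma qpoch2_split (w : ℂ) {q1 q2 : ℂ} (hq1 : ‖q1‖ < 1) (hq2 : ‖q2‖ < 1) :
    qpoch2 w q1 q2 = qpoch w q2 * qpoch2 (w * q1) q1 q2 := by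
  classical
  set F : ℕ × ℕ → ℂ := fun p => 1 - w * q1 ^ p.1 * q2 ^ p.2 with hF
  set s : Set (ℕ × ℕ) := {p : ℕ × ℕ | p.1 = 0} with hs
  have h0 : Multipliable (F ∘ ((↑) : s → ℕ × ℕ)) := by
    rw [← eSlice.multipliable_iff]
    refine (multipliable_qpoch w hq2).congr fun n => ?_
    simp [hF, eSlice]
  have hc : Multipliable (F ∘ ((↑) : (sᶜ : Set (ℕ × ℕ)) → ℕ × ℕ)) := by
    rw [← eShift.multipliable_iff]
    refine (multipliable_qpoch2 (w * q1) hq1 hq2).congr fun nm => ?_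
    show 1 - w * q1 * q1 ^ nm.1 * q2 ^ nm.2 = 1 - w * q1 ^ (nm.1 + 1) * q2 ^ nm.2
    rw [pow_succ]; ring
  have key := Multipliable.tprod_mul_tprod_compl (f := F) h0 hc
  rw [qpoch2, ← key]
  congr 1
  · have he := Equiv.tprod_eq eSlice (fun p : ↥s => F ↑p)
    rw [← he, qpoch]
    exact tprod_congr fun n => by simp [hF, eSlice]
  · have he := Equiv.tprod_eq eShift (fun p : ↥(sᶜ) => F ↑p)
    rw [← he, qpoch2]
    refine tprod_congr fun nm => ?_
    show 1 - w * q1 ^ (nm.1 + 1) * q2 ^ nm.2 = 1 - w * q1 * q1 ^ nm.1 * q2 ^ nm.2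
    rw [pow_succ]; ring


lemma xpow_add (x : ℝ) (a b : ℂ) : xpow x (a + b) = xpow x a * xpow x b := by
  rw [xpow, xpow, xpow, ← Complex.exp_add]
  congr 1; ring

lemma xpow_sub (x : ℝ) (a b : ℂ) : xpow x (a - b) = xpow x a / xpow x b := by
  rw [xpow, xpow, xpow, ← Complex.exp_sub]
  congr 1; ring

lemma xpow_ne_zero (x : ℝ) (a : ℂ) : xpow x a ≠ 0 := Complex.exp_ne_zero _

lemma xpow_congr (x : ℝ) {a b : ℂ} (h : a = b) : xpow x a = xpow x b := by rw [h]

lemma xpow_norm_lt_one {x : ℝ} (hx0 : 0 < x) (hx1 : x < 1) {t : ℝ} (ht : 0 < t) :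
    ‖xpow x ((t : ℝ) : ℂ)‖ < 1 := by
  have hl : Real.log x < 0 := Real.log_neg hx0 hx1
  rw [xpow, Complex.norm_exp]
  have h2 : (((t : ℝ) : ℂ) * ((Real.log x : ℝ) : ℂ)).re = t * Real.log x := by
    simp [Complex.mul_re]
  rw [h2]
  exact Real.exp_lt_one_iff.mpr (mul_neg_of_pos_of_neg ht hl)

lemma norm_x4_lt {x : ℝ} (hx0 : 0 < x) (hx1 : x < 1) : ‖xpow x (4 : ℂ)‖ < 1 := by
  have := xpow_norm_lt_one hx0 hx1 (t := 4) (by norm_num)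
  simpa using this

lemma norm_x2r_lt {x r : ℝ} (hx0 : 0 < x) (hx1 : x < 1) (hr : 1 < r) :
    ‖xpow x (2 * (r : ℂ))‖ < 1 := by
  have := xpow_norm_lt_one hx0 hx1 (t := 2 * r) (by linarith)
  have h : ((2 * r : ℝ) : ℂ) = 2 * (r : ℂ) := by push_cast; ring
  rwa [h] at this

def Pe (x r : ℝ) (a : ℂ) : ℂ := qpoch2 (xpow x a) (xpow x 4) (xpow x (2 * (r : ℂ)))
def Qe (x r : ℝ) (a : ℂ) : ℂ := qpoch (xpow x a) (xpow x (2 * (r : ℂ)))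

lemma Pe_split {x r : ℝ} (hx0 : 0 < x) (hx1 : x < 1) (hr : 1 < r) (a : ℂ) :
    Pe x r a = Qe x r a * Pe x r (a + 4) := by
  rw [Pe, Qe, Pe, qpoch2_split (xpow x a) (norm_x4_lt hx0 hx1) (norm_x2r_lt hx0 hx1 hr),
    ← xpow_add]

lemma Qe_split {x r : ℝ} (hx0 : 0 < x) (hx1 : x < 1) (hr : 1 < r) (a : ℂ) :
    Qe x r a = (1 - xpow x a) * Qe x r (a + 2 * (r : ℂ)) := by
  rw [Qe, Qe, qpoch_split (xpow x a) (norm_x2r_lt hx0 hx1 hr), ← xpow_add]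

lemma brk_congr (x r : ℝ) {a b : ℂ} (h : a = b) : brk x r a = brk x r b := by rw [h]

lemma brk_eq (x r : ℝ) (v : ℂ) :
    brk x r v = xpow x (v ^ 2 / (r : ℂ) - v) *
      (Qe x r (2 * v) * Qe x r (2 * (r : ℂ) - 2 * v) * Qe x r (2 * (r : ℂ))) := by
  rw [brk, jtheta, Qe, Qe, Qe, ← xpow_sub]

lemma brk_neg {x r : ℝ} (hx0 : 0 < x) (hx1 : x < 1) (hr : 1 < r) (v : ℂ) :
    brk x r (-v) = -brk x r v := by
  rw [brk_eq, brk_eq]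
  have h1 : Qe x r (2 * -v) = (1 - xpow x (-(2 * v))) * Qe x r (2 * (r : ℂ) - 2 * v) := by
    rw [show (2 * -v : ℂ) = -(2 * v) from by ring, Qe_split hx0 hx1 hr (-(2 * v)),
      show (-(2 * v) + 2 * (r : ℂ) : ℂ) = 2 * (r : ℂ) - 2 * v from by ring]
  have h2 : Qe x r (2 * v) = (1 - xpow x (2 * v)) * Qe x r (2 * (r : ℂ) + 2 * v) := by
    rw [Qe_split hx0 hx1 hr (2 * v),
      show (2 * v + 2 * (r : ℂ) : ℂ) = 2 * (r : ℂ) + 2 * v from by ring]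
  have h3 : Qe x r (2 * (r : ℂ) - 2 * -v) = Qe x r (2 * (r : ℂ) + 2 * v) := by
    rw [show (2 * (r : ℂ) - 2 * -v : ℂ) = 2 * (r : ℂ) + 2 * v from by ring]
  rw [h1, h2, h3]
  have e1 : xpow x ((-v) ^ 2 / (r : ℂ) - -v) * xpow x (-(2 * v)) =
      xpow x (v ^ 2 / (r : ℂ) - v) := by
    rw [← xpow_add]; exact xpow_congr x (by ring)
  have e2 : xpow x ((-v) ^ 2 / (r : ℂ) - -v) =
      xpow x (v ^ 2 / (r : ℂ) - v) * xpow x (2 * v) := by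
    rw [← xpow_add]
    refine (xpow_congr x ?_).symm; ring
  linear_combination (Qe x r (2 * (r : ℂ) - 2 * v) * Qe x r (2 * (r : ℂ) + 2 * v) *
    Qe x r (2 * (r : ℂ))) * (e2 - e1)

lemma Pe_congr (x r : ℝ) {a b : ℂ} (h : a = b) : Pe x r a = Pe x r b := by rw [h]
lemma Qe_congr (x r : ℝ) {a b : ℂ} (h : a = b) : Qe x r a = Qe x r b := by rw [h]

lemma R0_eq (x r : ℝ) (v : ℂ) :
    R0 x r v = xpow x (-(2 * v) * ((r : ℂ) - 1) / (2 * (r : ℂ))) *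
      (Pe x r (2 * (r : ℂ) + 2 + 2 * v) * Pe x r (2 + 2 * v) * Pe x r (2 * (r : ℂ) - 2 * v) *
        Pe x r (4 - 2 * v)) /
      (Pe x r (2 * (r : ℂ) + 2 - 2 * v) * Pe x r (2 - 2 * v) * Pe x r (2 * (r : ℂ) + 2 * v) *
        Pe x r (4 + 2 * v)) := by
  have a1 : xpow x (2 * (r : ℂ)) * xpow x 2 * xpow x (2 * v)
      = xpow x (2 * (r : ℂ) + 2 + 2 * v) := by rw [← xpow_add, ← xpow_add]
  have a2 : xpow x 2 * xpow x (2 * v) = xpow x (2 + 2 * v) := (xpow_add x 2 (2 * v)).symm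
  have a3 : xpow x (2 * (r : ℂ)) / xpow x (2 * v) = xpow x (2 * (r : ℂ) - 2 * v) :=
    (xpow_sub x _ _).symm
  have a4 : xpow x 4 / xpow x (2 * v) = xpow x (4 - 2 * v) := (xpow_sub x _ _).symm
  have a5 : xpow x (2 * (r : ℂ)) * xpow x 2 / xpow x (2 * v)
      = xpow x (2 * (r : ℂ) + 2 - 2 * v) := by rw [← xpow_add, ← xpow_sub]
  have a6 : xpow x 2 / xpow x (2 * v) = xpow x (2 - 2 * v) := (xpow_sub x _ _).symm
  have a7 : xpow x (2 * (r : ℂ)) * xpow x (2 * v) = xpow x (2 * (r : ℂ) + 2 * v) :=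
    (xpow_add x _ _).symm
  have a8 : xpow x 4 * xpow x (2 * v) = xpow x (4 + 2 * v) := (xpow_add x _ _).symm
  rw [R0, a1, a2, a3, a4, a5, a6, a7, a8]
  rfl

lemma R0_brk_crossing {x r : ℝ} (hx0 : 0 < x) (hx1 : x < 1) (hr : 1 < r) (u : ℂ)
    (hRu : R0Defined x r u) (hRmu : R0Defined x r (-u - 1)) :
    R0 x r u * brk x r (-u) = R0 x r (-u - 1) * brk x r (1 + u) := by
  have hr0 : (r : ℂ) ≠ 0 := by
    simp only [ne_eq, Complex.ofReal_eq_zero]; intro h; rw [h] at hr; norm_num at hr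
  -- nonzero denominators in Pe form
  obtain ⟨n1, n2, n3, n4⟩ := hRu
  obtain ⟨m1, m2, m3, m4⟩ := hRmu
  have hd1 : Pe x r (2 * (r : ℂ) + 2 - 2 * u) ≠ 0 := by
    rw [Pe, show xpow x (2 * (r : ℂ) + 2 - 2 * u)
      = xpow x (2 * (r : ℂ)) * xpow x 2 / xpow x (2 * u) from by
        rw [← xpow_add, ← xpow_sub]]
    exact n1
  have hd2 : Pe x r (2 - 2 * u) ≠ 0 := by
    rw [Pe, show xpow x (2 - 2 * u) = xpow x 2 / xpow x (2 * u) from xpow_sub x _ _]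
    exact n2
  have hd3 : Pe x r (2 * (r : ℂ) + 2 * u) ≠ 0 := by
    rw [Pe, show xpow x (2 * (r : ℂ) + 2 * u)
      = xpow x (2 * (r : ℂ)) * xpow x (2 * u) from xpow_add x _ _]
    exact n3
  have hd4 : Pe x r (4 + 2 * u) ≠ 0 := by
    rw [Pe, show xpow x (4 + 2 * u) = xpow x 4 * xpow x (2 * u) from xpow_add x _ _]
    exact n4
  have hd1' : Pe x r (2 * (r : ℂ) + 4 + 2 * u) ≠ 0 := by
    rw [Pe, show xpow x (2 * (r : ℂ) + 4 + 2 * u)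
      = xpow x (2 * (r : ℂ)) * xpow x 2 / xpow x (2 * (-u - 1)) from by
        rw [← xpow_add, ← xpow_sub]; exact xpow_congr x (by ring)]
    exact m1
  have hd2' : Pe x r (4 + 2 * u) ≠ 0 := hd4
  have hd3' : Pe x r (2 * (r : ℂ) - 2 - 2 * u) ≠ 0 := by
    rw [Pe, show xpow x (2 * (r : ℂ) - 2 - 2 * u)
      = xpow x (2 * (r : ℂ)) * xpow x (2 * (-u - 1)) from by
        rw [← xpow_add]; exact xpow_congr x (by ring)]
    exact m3
  have hd4' : Pe x r (2 - 2 * u) ≠ 0 := hd2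
  -- rewrite R0 and brk
  rw [R0_eq x r u, R0_eq x r (-u - 1), brk_eq x r (-u), brk_eq x r (1 + u)]
  rw [Pe_congr x r (show 2 * (r : ℂ) + 2 + 2 * (-u - 1) = 2 * (r : ℂ) - 2 * u from by ring),
      Pe_congr x r (show 2 + 2 * (-u - 1) = -(2 * u) from by ring),
      Pe_congr x r (show 2 * (r : ℂ) - 2 * (-u - 1) = 2 * (r : ℂ) + 2 + 2 * u from by ring),
      Pe_congr x r (show 4 - 2 * (-u - 1) = 6 + 2 * u from by ring),
      Pe_congr x r (show 2 * (r : ℂ) + 2 - 2 * (-u - 1) = 2 * (r : ℂ) + 4 + 2 * u from by ring),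
      Pe_congr x r (show 2 - 2 * (-u - 1) = 4 + 2 * u from by ring),
      Pe_congr x r (show 2 * (r : ℂ) + 2 * (-u - 1) = 2 * (r : ℂ) - 2 - 2 * u from by ring),
      Pe_congr x r (show 4 + 2 * (-u - 1) = 2 - 2 * u from by ring)]
  rw [Qe_congr x r (show 2 * -u = -(2 * u) from by ring),
      Qe_congr x r (show 2 * (r : ℂ) - 2 * -u = 2 * (r : ℂ) + 2 * u from by ring),
      Qe_congr x r (show 2 * (1 + u) = 2 + 2 * u from by ring),
      Qe_congr x r (show 2 * (r : ℂ) - 2 * (1 + u) = 2 * (r : ℂ) - 2 - 2 * u from by ring)]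
  -- prefactor identity
  have hpref : xpow x (-(2 * u) * ((r : ℂ) - 1) / (2 * (r : ℂ))) *
        xpow x ((-u) ^ 2 / (r : ℂ) - -u)
      = xpow x (-(2 * (-u - 1)) * ((r : ℂ) - 1) / (2 * (r : ℂ))) *
        xpow x ((1 + u) ^ 2 / (r : ℂ) - (1 + u)) := by
    rw [← xpow_add, ← xpow_add]
    exact xpow_congr x (by field_simp; ring)
  -- splitting identities
  have S1 : Pe x r (2 + 2 * u) = Qe x r (2 + 2 * u) * Pe x r (6 + 2 * u) := by
    rw [Pe_split hx0 hx1 hr (2 + 2 * u)]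
    rw [Pe_congr x r (show (2 : ℂ) + 2 * u + 4 = 6 + 2 * u from by ring)]
  have S2 : Pe x r (-(2 * u)) = Qe x r (-(2 * u)) * Pe x r (4 - 2 * u) := by
    rw [Pe_split hx0 hx1 hr (-(2 * u))]
    rw [Pe_congr x r (show -(2 * u) + 4 = 4 - 2 * u from by ring)]
  have S3 : Pe x r (2 * (r : ℂ) - 2 - 2 * u)
      = Qe x r (2 * (r : ℂ) - 2 - 2 * u) * Pe x r (2 * (r : ℂ) + 2 - 2 * u) := by
    rw [Pe_split hx0 hx1 hr (2 * (r : ℂ) - 2 - 2 * u)]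
    rw [Pe_congr x r (show 2 * (r : ℂ) - 2 - 2 * u + 4 = 2 * (r : ℂ) + 2 - 2 * u from by ring)]
  have S4 : Pe x r (2 * (r : ℂ) + 2 * u)
      = Qe x r (2 * (r : ℂ) + 2 * u) * Pe x r (2 * (r : ℂ) + 4 + 2 * u) := by
    rw [Pe_split hx0 hx1 hr (2 * (r : ℂ) + 2 * u)]
    rw [Pe_congr x r (show 2 * (r : ℂ) + 2 * u + 4 = 2 * (r : ℂ) + 4 + 2 * u from by ring)]
  have hDL : Pe x r (2 * (r : ℂ) + 2 - 2 * u) * Pe x r (2 - 2 * u) *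
      Pe x r (2 * (r : ℂ) + 2 * u) * Pe x r (4 + 2 * u) ≠ 0 :=
    mul_ne_zero (mul_ne_zero (mul_ne_zero hd1 hd2) hd3) hd4
  have hDR : Pe x r (2 * (r : ℂ) + 4 + 2 * u) * Pe x r (4 + 2 * u) *
      Pe x r (2 * (r : ℂ) - 2 - 2 * u) * Pe x r (2 - 2 * u) ≠ 0 :=
    mul_ne_zero (mul_ne_zero (mul_ne_zero hd1' hd2') hd3') hd4'
  rw [div_mul_eq_mul_div, div_mul_eq_mul_div, div_eq_div_iff hDL hDR]
  rw [S1, S2, S3, S4]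
  linear_combination (Pe x r (2 * (r : ℂ) + 2 + 2 * u) * Qe x r (2 + 2 * u) *
    Pe x r (6 + 2 * u) * Pe x r (2 * (r : ℂ) - 2 * u) * Pe x r (4 - 2 * u) *
    Qe x r (-(2 * u)) * Qe x r (2 * (r : ℂ) + 2 * u) * Qe x r (2 * (r : ℂ)) *
    Pe x r (2 * (r : ℂ) + 4 + 2 * u) * Pe x r (4 + 2 * u) *
    Qe x r (2 * (r : ℂ) - 2 - 2 * u) * Pe x r (2 * (r : ℂ) + 2 - 2 * u) *
    Pe x r (2 - 2 * u)) * hpref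


/-- the SOS face weights satisfy the crossing symmetry relation
`W(a,b;d,c|u) = (-1)^{(a+d-b-c)/2} ([b]/[a]) W(d,a;c,b|-u-1)`. -/
theorem face_crossing (x r : ℝ) (hx0 : 0 < x) (hx1 : x < 1) (hr : 1 < r)
    (u : ℂ) (a b c d : ℤ)
    (hab : (a - b) ^ 2 = 1) (had : (a - d) ^ 2 = 1) (hbc : (b - c) ^ 2 = 1)
    (hdc : (d - c) ^ 2 = 1)
    (hRu : R0Defined x r u) (hRmu : R0Defined x r (-u - 1))
    (h1u : brk x r (1 + u) ≠ 0) (hmu : brk x r (-u) ≠ 0)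
    (ha : brk x r (a : ℂ) ≠ 0) (hd : brk x r (d : ℂ) ≠ 0) :
    Wfw x r u a b d c =
      (-1 : ℂ) ^ ((a + d - b - c) / 2) * (brk x r (b : ℂ) / brk x r (a : ℂ)) *
        Wfw x r (-u - 1) d a c b := by
  have key := R0_brk_crossing hx0 hx1 hr u hRu hRmu
  have hR0' : R0 x r (-u - 1) = R0 x r u * brk x r (-u) / brk x r (1 + u) :=
    (eq_div_iff h1u).mpr key.symm
  have hbn : brk x r (-u) = -brk x r u := brk_neg hx0 hx1 hr u
  have hbn1 : brk x r (-u - 1) = -brk x r (1 + u) := by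
    rw [brk_congr x r (show (-u - 1 : ℂ) = -(1 + u) from by ring), brk_neg hx0 hx1 hr (1 + u)]
  have hbm : brk x r (1 + (-u - 1)) = brk x r (-u) :=
    brk_congr x r (by ring)
  have sqcases : ∀ n m : ℤ, (n - m) ^ 2 = 1 → m = n - 1 ∨ m = n + 1 := by
    intro n m h
    have h2 : (n - m - 1) * (n - m + 1) = 0 := by linear_combination h
    rcases mul_eq_zero.mp h2 with h3 | h3 <;> omega
  rcases sqcases a b hab with hb | hb <;> rcases sqcases a d had with hdd | hdd <;>
    subst hb <;> subst hdd
  · -- b = a-1, d = a-1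
    rcases sqcases (a - 1) c hbc with hc0 | hc0
    · -- c = a-2 (case 3')
      have hc : c = a - 2 := by omega
      subst hc
      have hL : Wfw x r u a (a - 1) (a - 1) (a - 2) = R0 x r u := by
        simp only [Wfw]
        have hcond : ((a - 1 : ℤ) - a) ^ 2 = 1 ∧ ((a - 1 : ℤ) - a) ^ 2 = 1 ∧
            ((a - 2 : ℤ) - (a - 1)) ^ 2 = 1 ∧ ((a - 2 : ℤ) - (a - 1)) ^ 2 = 1 :=
          ⟨by ring, by ring, by ring, by ring⟩
        rw [if_pos hcond, if_neg (show ¬(a - 2 = a) from by omega)]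
      have hR : Wfw x r (-u - 1) (a - 1) a (a - 2) (a - 1) =
          R0 x r (-u - 1) * brk x r ((a : ℤ) : ℂ) * brk x r (-u - 1) /
            (brk x r (((a - 1 : ℤ) : ℤ) : ℂ) * brk x r (1 + (-u - 1))) := by
        simp only [Wfw]
        have hcond : ((a : ℤ) - (a - 1)) ^ 2 = 1 ∧ ((a - 2 : ℤ) - (a - 1)) ^ 2 = 1 ∧
            ((a - 1 : ℤ) - a) ^ 2 = 1 ∧ ((a - 1 : ℤ) - (a - 2)) ^ 2 = 1 :=
          ⟨by ring, by ring, by ring, by ring⟩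
        rw [if_pos hcond, if_true, if_neg (show ¬(a = a - 2) from by omega)]
      rw [hL, hR, show (a + (a - 1) - (a - 1) - (a - 2)) / 2 = (1 : ℤ) from by omega,
        zpow_one, hbm, hbn1, hR0']
      generalize brk x r (((a - 1 : ℤ) : ℤ) : ℂ) = B at hd ⊢
      field_simp [ha, hd, hmu, h1u]
    · -- c = a (case 1')
      have hc : c = a := by omega
      rw [hc]
      have hL : Wfw x r u a (a - 1) (a - 1) a =
          R0 x r u * brk x r ((a : ℂ) - (((a - 1 : ℤ) - a : ℤ) : ℂ) * u) * brk x r 1 /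
            (brk x r ((a : ℤ) : ℂ) * brk x r (1 + u)) := by
        simp only [Wfw]
        have hcond : ((a - 1 : ℤ) - a) ^ 2 = 1 ∧ ((a - 1 : ℤ) - a) ^ 2 = 1 ∧
            ((a : ℤ) - (a - 1)) ^ 2 = 1 ∧ ((a : ℤ) - (a - 1)) ^ 2 = 1 :=
          ⟨by ring, by ring, by ring, by ring⟩
        rw [if_pos hcond, if_true, if_true]
      have hR : Wfw x r (-u - 1) (a - 1) a a (a - 1) =
          R0 x r (-u - 1) *
            brk x r (((a - 1 : ℤ) : ℂ) - (((a : ℤ) - (a - 1) : ℤ) : ℂ) * (-u - 1)) *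
            brk x r 1 / (brk x r (((a - 1 : ℤ) : ℤ) : ℂ) * brk x r (1 + (-u - 1))) := by
        simp only [Wfw]
        have hcond : ((a : ℤ) - (a - 1)) ^ 2 = 1 ∧ ((a : ℤ) - (a - 1)) ^ 2 = 1 ∧
            ((a - 1 : ℤ) - a) ^ 2 = 1 ∧ ((a - 1 : ℤ) - a) ^ 2 = 1 :=
          ⟨by ring, by ring, by ring, by ring⟩
        rw [if_pos hcond, if_true, if_true]
      rw [hL, hR, show (a + (a - 1) - (a - 1) - a) / 2 = (0 : ℤ) from by omega, zpow_zero,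
        brk_congr x r (show ((a : ℂ) - (((a - 1 : ℤ) - a : ℤ) : ℂ) * u) = (a : ℂ) + u from by
          push_cast; ring),
        brk_congr x r (show ((((a - 1 : ℤ)) : ℂ) - (((a : ℤ) - (a - 1) : ℤ) : ℂ) * (-u - 1))
          = (a : ℂ) + u from by push_cast; ring),
        hbm, hR0']
      generalize brk x r (((a - 1 : ℤ) : ℤ) : ℂ) = B at hd ⊢
      field_simp [ha, hd, hmu, h1u]
  · -- b = a-1, d = a+1
    rcases sqcases (a - 1) c hbc with hc0 | hc0
    · -- c = a-2 : impossible
      exfalso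
      have hc : c = a - 2 := by omega
      subst hc
      have h9 : (9 : ℤ) = 1 := by linear_combination hdc
      norm_num at h9
    · -- c = a (case 2')
      have hc : c = a := by omega
      rw [hc]
      have hL : Wfw x r u a (a - 1) (a + 1) a =
          R0 x r u * brk x r (((a - 1 : ℤ) : ℤ) : ℂ) * brk x r u /
            (brk x r ((a : ℤ) : ℂ) * brk x r (1 + u)) := by
        simp only [Wfw]
        have hcond : ((a - 1 : ℤ) - a) ^ 2 = 1 ∧ ((a + 1 : ℤ) - a) ^ 2 = 1 ∧
            ((a : ℤ) - (a - 1)) ^ 2 = 1 ∧ ((a : ℤ) - (a + 1)) ^ 2 = 1 :=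
          ⟨by ring, by ring, by ring, by ring⟩
        rw [if_pos hcond, if_true, if_neg (show ¬(a - 1 = a + 1) from by omega)]
      have hR : Wfw x r (-u - 1) (a + 1) a a (a - 1) = R0 x r (-u - 1) := by
        simp only [Wfw]
        have hcond : ((a : ℤ) - (a + 1)) ^ 2 = 1 ∧ ((a : ℤ) - (a + 1)) ^ 2 = 1 ∧
            ((a - 1 : ℤ) - a) ^ 2 = 1 ∧ ((a - 1 : ℤ) - a) ^ 2 = 1 :=
          ⟨by ring, by ring, by ring, by ring⟩
        rw [if_pos hcond, if_neg (show ¬(a - 1 = a + 1) from by omega)]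
      rw [hL, hR, show (a + (a + 1) - (a - 1) - a) / 2 = (1 : ℤ) from by omega, zpow_one,
        hR0', hbn]
      generalize brk x r (((a - 1 : ℤ) : ℤ) : ℂ) = B at hd ⊢
      field_simp [ha, hmu, h1u]
  · -- b = a+1, d = a-1
    rcases sqcases (a + 1) c hbc with hc0 | hc0
    · -- c = a (case 2)
      have hc : c = a := by omega
      rw [hc]
      have hL : Wfw x r u a (a + 1) (a - 1) a =
          R0 x r u * brk x r (((a + 1 : ℤ) : ℤ) : ℂ) * brk x r u /
            (brk x r ((a : ℤ) : ℂ) * brk x r (1 + u)) := by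
        simp only [Wfw]
        have hcond : ((a + 1 : ℤ) - a) ^ 2 = 1 ∧ ((a - 1 : ℤ) - a) ^ 2 = 1 ∧
            ((a : ℤ) - (a + 1)) ^ 2 = 1 ∧ ((a : ℤ) - (a - 1)) ^ 2 = 1 :=
          ⟨by ring, by ring, by ring, by ring⟩
        rw [if_pos hcond, if_true, if_neg (show ¬(a + 1 = a - 1) from by omega)]
      have hR : Wfw x r (-u - 1) (a - 1) a a (a + 1) = R0 x r (-u - 1) := by
        simp only [Wfw]
        have hcond : ((a : ℤ) - (a - 1)) ^ 2 = 1 ∧ ((a : ℤ) - (a - 1)) ^ 2 = 1 ∧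
            ((a + 1 : ℤ) - a) ^ 2 = 1 ∧ ((a + 1 : ℤ) - a) ^ 2 = 1 :=
          ⟨by ring, by ring, by ring, by ring⟩
        rw [if_pos hcond, if_neg (show ¬(a + 1 = a - 1) from by omega)]
      rw [hL, hR, show (a + (a - 1) - (a + 1) - a) / 2 = (-1 : ℤ) from by omega,
        hR0', hbn]
      rw [zpow_neg, zpow_one]
      generalize brk x r (((a + 1 : ℤ) : ℤ) : ℂ) = B at hd ⊢
      field_simp [ha, hmu, h1u]
    · -- c = a+2 : impossible
      exfalso
      have hc : c = a + 2 := by omega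
      subst hc
      have h9 : (9 : ℤ) = 1 := by linear_combination hdc
      norm_num at h9
  · -- b = a+1, d = a+1
    rcases sqcases (a + 1) c hbc with hc0 | hc0
    · -- c = a (case 1)
      have hc : c = a := by omega
      rw [hc]
      have hL : Wfw x r u a (a + 1) (a + 1) a =
          R0 x r u * brk x r ((a : ℂ) - (((a + 1 : ℤ) - a : ℤ) : ℂ) * u) * brk x r 1 /
            (brk x r ((a : ℤ) : ℂ) * brk x r (1 + u)) := by
        simp only [Wfw]
        have hcond : ((a + 1 : ℤ) - a) ^ 2 = 1 ∧ ((a + 1 : ℤ) - a) ^ 2 = 1 ∧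
            ((a : ℤ) - (a + 1)) ^ 2 = 1 ∧ ((a : ℤ) - (a + 1)) ^ 2 = 1 :=
          ⟨by ring, by ring, by ring, by ring⟩
        rw [if_pos hcond, if_true, if_true]
      have hR : Wfw x r (-u - 1) (a + 1) a a (a + 1) =
          R0 x r (-u - 1) *
            brk x r (((a + 1 : ℤ) : ℂ) - (((a : ℤ) - (a + 1) : ℤ) : ℂ) * (-u - 1)) *
            brk x r 1 / (brk x r (((a + 1 : ℤ) : ℤ) : ℂ) * brk x r (1 + (-u - 1))) := by
        simp only [Wfw]
        have hcond : ((a : ℤ) - (a + 1)) ^ 2 = 1 ∧ ((a : ℤ) - (a + 1)) ^ 2 = 1 ∧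
            ((a + 1 : ℤ) - a) ^ 2 = 1 ∧ ((a + 1 : ℤ) - a) ^ 2 = 1 :=
          ⟨by ring, by ring, by ring, by ring⟩
        rw [if_pos hcond, if_true, if_true]
      rw [hL, hR, show (a + (a + 1) - (a + 1) - a) / 2 = (0 : ℤ) from by omega, zpow_zero,
        brk_congr x r (show ((a : ℂ) - (((a + 1 : ℤ) - a : ℤ) : ℂ) * u) = (a : ℂ) - u from by
          push_cast; ring),
        brk_congr x r (show ((((a + 1 : ℤ)) : ℂ) - (((a : ℤ) - (a + 1) : ℤ) : ℂ) * (-u - 1))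
          = (a : ℂ) - u from by push_cast; ring),
        hbm, hR0']
      generalize brk x r (((a + 1 : ℤ) : ℤ) : ℂ) = B at hd ⊢
      field_simp [ha, hd, hmu, h1u]
    · -- c = a+2 (case 3)
      have hc : c = a + 2 := by omega
      subst hc
      have hL : Wfw x r u a (a + 1) (a + 1) (a + 2) = R0 x r u := by
        simp only [Wfw]
        have hcond : ((a + 1 : ℤ) - a) ^ 2 = 1 ∧ ((a + 1 : ℤ) - a) ^ 2 = 1 ∧
            ((a + 2 : ℤ) - (a + 1)) ^ 2 = 1 ∧ ((a + 2 : ℤ) - (a + 1)) ^ 2 = 1 :=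
          ⟨by ring, by ring, by ring, by ring⟩
        rw [if_pos hcond, if_neg (show ¬(a + 2 = a) from by omega)]
      have hR : Wfw x r (-u - 1) (a + 1) a (a + 2) (a + 1) =
          R0 x r (-u - 1) * brk x r ((a : ℤ) : ℂ) * brk x r (-u - 1) /
            (brk x r (((a + 1 : ℤ) : ℤ) : ℂ) * brk x r (1 + (-u - 1))) := by
        simp only [Wfw]
        have hcond : ((a : ℤ) - (a + 1)) ^ 2 = 1 ∧ ((a + 2 : ℤ) - (a + 1)) ^ 2 = 1 ∧
            ((a + 1 : ℤ) - a) ^ 2 = 1 ∧ ((a + 1 : ℤ) - (a + 2)) ^ 2 = 1 :=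
          ⟨by ring, by ring, by ring, by ring⟩
        rw [if_pos hcond, if_true, if_neg (show ¬(a = a + 2) from by omega)]
      rw [hL, hR, show (a + (a + 1) - (a + 1) - (a + 2)) / 2 = (-1 : ℤ) from by omega,
        hbm, hbn1, hR0']
      rw [zpow_neg, zpow_one]
      generalize brk x r (((a + 1 : ℤ) : ℤ) : ℂ) = B at hd ⊢
      field_simp [ha, hd, hmu, h1u]
end EV
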